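/- If B is a 3×3 real cluster-cyclic exchange matrix, then for every reduced sequence w of indices, sign(B^w) = (−1)^{|w|} sign(B), where |w| is the length of w. -/
import Mathlib


open Matrix

noncomputable section

abbrev Mat3 := Matrix (Fin 3) (Fin 3) ℝ

def pPart {n : ℕ} (A : Matrix (Fin n) (Fin n) ℝ) : Matrix (Fin n) (Fin n) ℝ :=
  Matrix.of fun i j => max (A i j) 0

def Jmat {n : ℕ} (k : Fin n) : Matrix (Fin n) (Fin n) ℝ :=
  Matrix.diagonal fun i => if i = k then -1 else 1

/-- `A^{•k}`: keep only column `k`. -/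
def colSel {n : ℕ} (k : Fin n) (A : Matrix (Fin n) (Fin n) ℝ) : Matrix (Fin n) (Fin n) ℝ :=
  Matrix.of fun i j => if j = k then A i j else 0

/-- `A^{k•}`: keep only row `k`. -/
def rowSel {n : ℕ} (k : Fin n) (A : Matrix (Fin n) (Fin n) ℝ) : Matrix (Fin n) (Fin n) ℝ :=
  Matrix.of fun i j => if i = k then A i j else 0

/-- Matrix mutation in direction `k`. -/
def mutB {n : ℕ} (k : Fin n) (B : Matrix (Fin n) (Fin n) ℝ) : Matrix (Fin n) (Fin n) ℝ :=
  (Jmat k + colSel k (pPart (-B))) * B * (Jmat k + rowSel k (pPart B))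

/-- One step of the simultaneous `(B, C, G)` recursion, mutating at direction `k`. -/
def CGstep {n : ℕ} (B0 : Matrix (Fin n) (Fin n) ℝ)
    (p : Matrix (Fin n) (Fin n) ℝ × Matrix (Fin n) (Fin n) ℝ × Matrix (Fin n) (Fin n) ℝ)
    (k : Fin n) :
    Matrix (Fin n) (Fin n) ℝ × Matrix (Fin n) (Fin n) ℝ × Matrix (Fin n) (Fin n) ℝ :=
  (mutB k p.1,
   p.2.1 * Jmat k + p.2.1 * rowSel k (pPart p.1) + colSel k (pPart (-p.2.1)) * p.1,
   p.2.2 * Jmat k + p.2.2 * colSel k (pPart (-p.1)) - B0 * colSel k (pPart (-p.2.1)))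

def CGmat {n : ℕ} (B : Matrix (Fin n) (Fin n) ℝ) (w : List (Fin n)) :
    Matrix (Fin n) (Fin n) ℝ × Matrix (Fin n) (Fin n) ℝ × Matrix (Fin n) (Fin n) ℝ :=
  w.foldl (CGstep B) (B, 1, 1)

/-- The exchange matrix `B^w`. -/
def Bmat {n : ℕ} (B : Matrix (Fin n) (Fin n) ℝ) (w : List (Fin n)) : Matrix (Fin n) (Fin n) ℝ :=
  (CGmat B w).1

/-- The `C`-matrix `C^w`. -/
def Cmat {n : ℕ} (B : Matrix (Fin n) (Fin n) ℝ) (w : List (Fin n)) : Matrix (Fin n) (Fin n) ℝ :=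
  (CGmat B w).2.1

/-- The `G`-matrix `G^w`. -/
def Gmat {n : ℕ} (B : Matrix (Fin n) (Fin n) ℝ) (w : List (Fin n)) : Matrix (Fin n) (Fin n) ℝ :=
  (CGmat B w).2.2

/-- A sequence is reduced if consecutive entries differ. -/
def ReducedSeq {n : ℕ} (w : List (Fin n)) : Prop := w.Chain' (· ≠ ·)

def SkewSymmetrizable {n : ℕ} (B : Matrix (Fin n) (Fin n) ℝ) : Prop :=
  ∃ d : Fin n → ℝ, (∀ i, 0 < d i) ∧ (Matrix.diagonal d * B)ᵀ = -(Matrix.diagonal d * B)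

def cyclicPattern : Mat3 := !![0,-1,1; 1,0,-1; -1,1,0]

/-- A rank-3 exchange matrix is cyclic if its sign pattern is `± cyclicPattern`. -/
def IsCyclic3 (B : Mat3) : Prop :=
  (∀ i j, Real.sign (B i j) = cyclicPattern i j) ∨
  (∀ i j, Real.sign (B i j) = - cyclicPattern i j)

/-- `B` is cluster-cyclic if every iterated mutation along a reduced sequence is cyclic. -/
def ClusterCyclic (B : Mat3) : Prop :=
  ∀ w : List (Fin 3), ReducedSeq w → IsCyclic3 (Bmat B w)

/-- `ε` is a family of tropical signs for the (sign-coherent) `C`-pattern of `B`. -/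
def IsTropSigns (B : Mat3) (ε : List (Fin 3) → Fin 3 → ℝ) : Prop :=
  ∀ w : List (Fin 3), ReducedSeq w → ∀ i : Fin 3,
    (ε w i = 1 ∨ ε w i = -1) ∧ ∀ j, 0 ≤ ε w i * Cmat B w j i

lemma diag_zero_of_cyclic (A : Mat3) (h : IsCyclic3 A) (k : Fin 3) : A k k = 0 := by
  have hs : Real.sign (A k k) = 0 := by
    rcases h with h | h <;> rw [h] <;> fin_cases k <;> norm_num [cyclicPattern]
  exact Real.sign_eq_zero_iff.mp hs

lemma mutB_row (A : Mat3) (k : Fin 3) (hd : A k k = 0) (j : Fin 3) :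
    mutB k A k j = -(A k j) := by
  fin_cases k <;> fin_cases j <;>
    simp_all [mutB, Matrix.mul_apply, Fin.sum_univ_three, Jmat, colSel, rowSel, pPart,
      Matrix.diagonal]

theorem sign_of_mutated_cluster_cyclic (B : Mat3) (hB : ClusterCyclic B)
    (w : List (Fin 3)) (hw : ReducedSeq w) :
    ∀ i j, Real.sign (Bmat B w i j) = (-1 : ℝ) ^ w.length * Real.sign (B i j) := by
  revert hw
  induction w using List.reverseRecOn with
  | nil =>
    intro _ i j
    simp [Bmat, CGmat]
  | append_singleton l k ih =>
    intro hw
    have hw' : ReducedSeq l := (List.isChain_append.mp hw).1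
    have ihl := ih hw'
    set A := Bmat B l with hA
    have hBw : Bmat B (l ++ [k]) = mutB k A := by
      simp [Bmat, CGmat, List.foldl_append, CGstep, hA]
    have hcycA := hB l hw'
    have hcycA' := hB (l ++ [k]) hw
    rw [hBw] at hcycA'
    have hd : A k k = 0 := diag_zero_of_cyclic A hcycA k
    obtain ⟨j0, hj0⟩ : ∃ j0, cyclicPattern k j0 ≠ 0 := by
      fin_cases k
      · exact ⟨1, by norm_num [cyclicPattern]⟩
      · exact ⟨0, by norm_num [cyclicPattern]⟩
      · exact ⟨0, by norm_num [cyclicPattern]⟩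
    have hsign : Real.sign (mutB k A k j0) = - Real.sign (A k j0) := by
      rw [mutB_row A k hd, Real.sign_neg]
    have key : ∀ i j, Real.sign (mutB k A i j) = - Real.sign (A i j) := by
      rcases hcycA with h1 | h1 <;> rcases hcycA' with h2 | h2
      · exfalso
        rw [h2 k j0, h1 k j0] at hsign
        exact hj0 (by linarith)
      · intro i j; rw [h2 i j, h1 i j]
      · intro i j; rw [h2 i j, h1 i j]; ring
      · exfalso
        rw [h2 k j0, h1 k j0] at hsign
        exact hj0 (by linarith)
    intro i j
    rw [hBw, key i j, ihl i j]
    simp only [List.length_append, List.length_singleton, pow_succ]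
    ring
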